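/- Let A be a commutative unital C*-algebra and let M be a Hilbert A-module. Denote by Γ(M) the linear span of {θ_{x,f} : x ∈ M, f ∈ M'}. The map φ : Γ(M) → A given by φ(Σ_{i=1}^n θ_{x_i,f_i}) = Σ_{i=1}^n f_i(x_i) is well defined (independent of the representation of an element of Γ(M) as such a sum), is A-linear, and satisfies φ(SA) = φ(AS) for every S ∈ Γ(M) and every A ∈ End_A(M). -/

import Mathlib

/-!
If `∑ᵢ θ_{xᵢ,fᵢ} = 0`, the matrix `F = (fᵢ xⱼ)` over `A` satisfies `F² = 0`, because
`(F²)ⱼₖ = fⱼ (∑ᵢ fᵢ(xₖ) xᵢ) = 0`. Its trace `∑ᵢ fᵢ xᵢ` is therefore nilpotent in the commutative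
ring `A`, hence zero, since a commutative C*-algebra has no nonzero nilpotents. So the span of the
pairs `(θ_{x,f}, f x)` is the graph of a linear map on `Γ(M)`. Its `A`-linearity and the trace
property are checked on generators: `a θ_{x,f} = θ_{ax,f}`, while `T θ_{x,f} = θ_{Tx,f}` and
`θ_{x,f} T = θ_{x,f∘T}` both have trace `f (T x)`.
-/

/-- `Γ(M)`: the linear span of the operators `θ_{x,f} : y ↦ f y • x` for `x ∈ M` and
`f ∈ M'` (a bounded `A`-linear map `M → A`). -/
noncomputable def Gamma (A : Type*) (M : Type*) [CStarAlgebra A] [NormedAddCommGroup M]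
    [NormedSpace ℂ M] [Module A M] [IsScalarTower ℂ A M] [IsBoundedSMul A M] :
    Submodule ℂ (M →L[ℂ] M) :=
  Submodule.span ℂ {T | ∃ (x : M) (f : M →L[ℂ] A),
    (∀ (a : A) (m : M), f (a • m) = a * f m) ∧ T = f.smulRight x}


theorem IsSelfAdjoint.eq_zero_of_isNilpotent {E : Type*} [NormedRing E] [StarRing E]
    [CStarRing E] {x : E} (hx : IsSelfAdjoint x) (hn : IsNilpotent x) : x = 0 := by
  obtain ⟨k, hk⟩ := hn
  have h2k : x ^ 2 ^ k = 0 := pow_eq_zero_of_le k.lt_two_pow_self.le hk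
  rw [← norm_eq_zero, ← pow_eq_zero_iff (Nat.two_pow_pos k).ne', ← hx.norm_pow_two_pow, h2k,
    norm_zero]

instance CStarRing.isReduced_of_comm {E : Type*} [NormedCommRing E] [StarRing E]
    [CStarRing E] : IsReduced E where
  eq_zero c := fun ⟨k, hk⟩ ↦ by
    have hnil : IsNilpotent (star c * c) :=
      ⟨k, by rw [mul_pow, ← star_pow, hk, star_zero, zero_mul]⟩
    exact (CStarRing.star_mul_self_eq_zero_iff c).mp <|
      (IsSelfAdjoint.star_mul_self c).eq_zero_of_isNilpotent hnil

theorem sum_apply_eq_zero_of_sum_smulRight_eq_zero {R M ι : Type*} [CommRing R] [IsReduced R]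
    [AddCommGroup M] [Module R M] [Fintype ι] (g : ι → M →ₗ[R] R) (x : ι → M)
    (h : ∑ i, (g i).smulRight (x i) = 0) : ∑ i, g i (x i) = 0 := by
  classical
  set F : Matrix ι ι R := .of fun i j ↦ g i (x j)
  have hF : F * F = 0 := by
    ext j k
    have hk : ∑ i, g i (x k) • x i = 0 := by simpa using congr($h (x k))
    simpa [F, Matrix.mul_apply, mul_comm (g j _)] using congr(g j $hk)
  exact (Matrix.isNilpotent_trace_of_isNilpotent (M := F) ⟨2, by rw [sq, hF]⟩).eq_zero

section SmulRight

variable {A M : Type*} [TopologicalSpace A] [AddCommGroup M] [TopologicalSpace M] [Module ℂ M]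

theorem ContinuousLinearMap.mul_smulRight [Ring A] [Module ℂ A] [Module A M]
    [IsScalarTower ℂ A M] [ContinuousSMul A M] {T : M →L[ℂ] M}
    (hT : ∀ (a : A) (m : M), T (a • m) = a • T m) (f : M →L[ℂ] A) (x : M) :
    T * f.smulRight x = f.smulRight (T x) := by
  ext y
  simp [hT]

theorem ContinuousLinearMap.smul_smulRight [CommRing A] [Algebra ℂ A] [Module A M]
    [IsScalarTower ℂ A M] [ContinuousSMul A M] (a : A) (f : M →L[ℂ] A) (x : M) :
    a • f.smulRight x = f.smulRight (a • x) := by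
  ext y
  simp [smul_comm a (f y) x]

end SmulRight

namespace Gamma

section Ideal

variable {A M : Type*} [CStarAlgebra A] [NormedAddCommGroup M] [NormedSpace ℂ M] [Module A M]
  [IsScalarTower ℂ A M] [IsBoundedSMul A M]

theorem smulRight_mem {f : M →L[ℂ] A} (hf : ∀ (a : A) (m : M), f (a • m) = a * f m) (x : M) :
    f.smulRight x ∈ Gamma A M :=
  Submodule.subset_span ⟨x, f, hf, rfl⟩

theorem linearMap_ext {N : Type*} [AddCommGroup N] [Module ℂ N] {φ ψ : Gamma A M →ₗ[ℂ] N}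
    (h : ∀ (x : M) (f : M →L[ℂ] A) (hf : ∀ (a : A) (m : M), f (a • m) = a * f m),
      φ ⟨f.smulRight x, smulRight_mem hf x⟩ = ψ ⟨f.smulRight x, smulRight_mem hf x⟩) :
    φ = ψ :=
  LinearMap.ext_on Submodule.span_span_coe_preimage <| by
    rintro ⟨_, _⟩ ⟨x, f, hf, rfl⟩
    exact h x f hf

theorem mul_mem_left {T S : M →L[ℂ] M} (hT : ∀ (a : A) (m : M), T (a • m) = a • T m)
    (hS : S ∈ Gamma A M) : T * S ∈ Gamma A M := by
  refine (Submodule.span_le (p := (Gamma A M).comap (LinearMap.mulLeft ℂ T))).mpr ?_ hS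
  rintro _ ⟨x, f, hf, rfl⟩
  simpa [T.mul_smulRight hT] using smulRight_mem hf (T x)

theorem mul_mem_right {T S : M →L[ℂ] M} (hT : ∀ (a : A) (m : M), T (a • m) = a • T m)
    (hS : S ∈ Gamma A M) : S * T ∈ Gamma A M := by
  refine (Submodule.span_le (p := (Gamma A M).comap (LinearMap.mulRight ℂ T))).mpr ?_ hS
  rintro _ ⟨x, f, hf, rfl⟩
  exact smulRight_mem (f := f.comp T) (fun a m ↦ by simp [hT, hf]) x

end Ideal

variable {A M : Type*} [CommCStarAlgebra A] [NormedAddCommGroup M] [NormedSpace ℂ M]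
  [Module A M] [IsScalarTower ℂ A M] [IsBoundedSMul A M]

theorem smul_mem (a : A) {S : M →L[ℂ] M} (hS : S ∈ Gamma A M) : a • S ∈ Gamma A M := by
  refine (Submodule.span_le (p := (Gamma A M).comap (DistribSMul.toLinearMap ℂ _ a))).mpr ?_ hS
  rintro _ ⟨x, f, hf, rfl⟩
  simpa [f.smul_smulRight] using smulRight_mem hf (a • x)

variable (A M) in
noncomputable def traceGraph : Submodule ℂ ((M →L[ℂ] M) × A) :=
  Submodule.span ℂ {p | ∃ (x : M) (f : M →L[ℂ] A),
    (∀ (a : A) (m : M), f (a • m) = a * f m) ∧ p = (f.smulRight x, f x)}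

theorem smulRight_mem_traceGraph {f : M →L[ℂ] A} (hf : ∀ (a : A) (m : M), f (a • m) = a * f m)
    (x : M) : (f.smulRight x, f x) ∈ traceGraph A M :=
  Submodule.subset_span ⟨x, f, hf, rfl⟩

theorem map_fst_traceGraph :
    (traceGraph A M).map (LinearMap.fst ℂ (M →L[ℂ] M) A) = Gamma A M := by
  rw [traceGraph, Submodule.map_span, Gamma]
  congr 1
  ext T
  simp [eq_comm]

theorem snd_eq_zero_of_mem_traceGraph :
    ∀ p ∈ traceGraph A M, p.1 = 0 → p.2 = 0 := by
  intro p hp hp1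
  obtain ⟨n, c, gen, rfl⟩ := Submodule.mem_span_set'.mp hp
  choose x f hf hgen using fun i ↦ (gen i).2
  let g : Fin n → M →ₗ[A] A := fun i ↦
    { toFun := c i • f i
      map_add' := (c i • f i).map_add
      map_smul' := fun a m ↦ by simp [hf i] }
  have key := sum_apply_eq_zero_of_sum_smulRight_eq_zero g x ?_
  · simpa [hgen, g, Prod.snd_sum] using key
  · ext y
    simpa [hgen, g, Prod.fst_sum, smul_assoc] using congr($hp1 y)

noncomputable def trace : Gamma A M →ₗ[ℂ] A :=
  (traceGraph A M).toLinearPMap.toFun ∘ₗ Submodule.inclusion map_fst_traceGraph.ge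

theorem trace_eq_of_mem_traceGraph {S : Gamma A M} {c : A}
    (h : ((S : M →L[ℂ] M), c) ∈ traceGraph A M) : trace S = c := by
  have hg := snd_eq_zero_of_mem_traceGraph (A := A) (M := M)
  have hS : (S : M →L[ℂ] M) ∈ (traceGraph A M).map (LinearMap.fst ℂ _ A) :=
    map_fst_traceGraph.ge S.2
  exact (Submodule.existsUnique_from_graph @hg hS).unique
    (Submodule.mem_graph_toLinearPMap hg ⟨S, hS⟩) h

theorem trace_smulRight {x : M} {f : M →L[ℂ] A} (hf : ∀ (a : A) (m : M), f (a • m) = a * f m)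
    (h : f.smulRight x ∈ Gamma A M) : trace ⟨f.smulRight x, h⟩ = f x :=
  trace_eq_of_mem_traceGraph (smulRight_mem_traceGraph hf x)

theorem trace_mul_smulRight {T : M →L[ℂ] M} (hT : ∀ (a : A) (m : M), T (a • m) = a • T m)
    {x : M} {f : M →L[ℂ] A} (hf : ∀ (a : A) (m : M), f (a • m) = a * f m)
    (h : T * f.smulRight x ∈ Gamma A M) : trace ⟨T * f.smulRight x, h⟩ = f (T x) := by
  apply trace_eq_of_mem_traceGraph
  change (T * f.smulRight x, f (T x)) ∈ _
  rw [T.mul_smulRight hT]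
  exact smulRight_mem_traceGraph hf (T x)

theorem trace_smulRight_mul {T : M →L[ℂ] M} (hT : ∀ (a : A) (m : M), T (a • m) = a • T m)
    {x : M} {f : M →L[ℂ] A} (hf : ∀ (a : A) (m : M), f (a • m) = a * f m)
    (h : f.smulRight x * T ∈ Gamma A M) : trace ⟨f.smulRight x * T, h⟩ = f (T x) :=
  trace_eq_of_mem_traceGraph (smulRight_mem_traceGraph (f := f.comp T) (by simp [hT, hf]) x)

theorem trace_mul_comm {T : M →L[ℂ] M} (hT : ∀ (a : A) (m : M), T (a • m) = a • T m)
    (S : Gamma A M) :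
    trace ⟨(S : M →L[ℂ] M) * T, mul_mem_right hT S.2⟩ =
      trace ⟨T * (S : M →L[ℂ] M), mul_mem_left hT S.2⟩ := by
  have h : trace ∘ₗ (LinearMap.mulRight ℂ T).restrict
        (fun S hS ↦ show LinearMap.mulRight ℂ T S ∈ Gamma A M from mul_mem_right hT hS) =
      trace ∘ₗ (LinearMap.mulLeft ℂ T).restrict
        (fun S hS ↦ show LinearMap.mulLeft ℂ T S ∈ Gamma A M from mul_mem_left hT hS) :=
    linearMap_ext fun x f hf ↦ by
      simp only [LinearMap.comp_apply, LinearMap.restrict_apply, LinearMap.mulRight_apply,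
        LinearMap.mulLeft_apply]
      rw [trace_smulRight_mul hT hf, trace_mul_smulRight hT hf]
  exact congr($h S)

theorem trace_smul_smulRight (a : A) {x : M} {f : M →L[ℂ] A}
    (hf : ∀ (a : A) (m : M), f (a • m) = a * f m) (h : a • f.smulRight x ∈ Gamma A M) :
    trace ⟨a • f.smulRight x, h⟩ = a * f x := by
  apply trace_eq_of_mem_traceGraph
  change (a • f.smulRight x, a * f x) ∈ _
  rw [f.smul_smulRight, ← hf]
  exact smulRight_mem_traceGraph hf (a • x)

theorem trace_smul (a : A) (S : Gamma A M) :
    trace ⟨a • (S : M →L[ℂ] M), smul_mem a S.2⟩ = a * trace S := by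
  have h : trace ∘ₗ (DistribSMul.toLinearMap ℂ (M →L[ℂ] M) a).restrict
        (fun S hS ↦
          show DistribSMul.toLinearMap ℂ (M →L[ℂ] M) a S ∈ Gamma A M from smul_mem a hS) =
      LinearMap.mulLeft ℂ a ∘ₗ trace :=
    linearMap_ext fun x f hf ↦ by
      simp only [LinearMap.comp_apply, LinearMap.restrict_apply, DistribSMul.toLinearMap_apply,
        LinearMap.mulLeft_apply]
      rw [trace_smul_smulRight a hf, trace_smulRight hf]
  exact congr($h S)

end Gamma

variable {A : Type*} [CommCStarAlgebra A] [PartialOrder A] [StarOrderedRing A]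
variable {M : Type*} [NormedAddCommGroup M] [CompleteSpace M] [NormedSpace ℂ M]
  [Module A M] [IsScalarTower ℂ A M] [IsBoundedSMul A M]

theorem Gamma_trace_well_defined_general :
    ∃ φ : ↥(Gamma A M) →ₗ[ℂ] A,
      (∀ (x : M) (f : M →L[ℂ] A), (∀ (a : A) (m : M), f (a • m) = a * f m) →
        ∀ h : f.smulRight x ∈ Gamma A M, φ ⟨f.smulRight x, h⟩ = f x) ∧
      (∀ (a : A) (S S' : ↥(Gamma A M)),
        (∀ y : M, (S' : M →L[ℂ] M) y = a • (S : M →L[ℂ] M) y) → φ S' = a * φ S) ∧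
      (∀ (S : ↥(Gamma A M)) (T : M →L[ℂ] M), (∀ (a : A) (m : M), T (a • m) = a • T m) →
        ∀ (h₁ : (S : M →L[ℂ] M) * T ∈ Gamma A M) (h₂ : T * (S : M →L[ℂ] M) ∈ Gamma A M),
          φ ⟨(S : M →L[ℂ] M) * T, h₁⟩ = φ ⟨T * (S : M →L[ℂ] M), h₂⟩) := by
  refine ⟨Gamma.trace, fun x f hf h ↦ Gamma.trace_smulRight hf h, fun a S S' hS' ↦ ?_,
    fun S T hT _ _ ↦ Gamma.trace_mul_comm hT S⟩
  obtain rfl : S' = ⟨a • (S : M →L[ℂ] M), Gamma.smul_mem a S.2⟩ :=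
    Subtype.ext (ContinuousLinearMap.ext hS')
  exact Gamma.trace_smul a S

/-- The map `φ : Γ(M) → A`, `φ(∑ θ_{xᵢ,fᵢ}) = ∑ fᵢ xᵢ`, is well defined (i.e. there is a
linear map `φ` on `Γ(M)` with `φ (θ_{x,f}) = f x`), is `A`-linear, and is tracial:
`φ (S * T) = φ (T * S)` for `S ∈ Γ(M)` and `T ∈ End_A(M)`. -/
theorem Gamma_trace_well_defined
    (inn : M → M → A)
    (inn_add_left : ∀ x y z : M, inn (x + y) z = inn x z + inn y z)
    (inn_smul_left : ∀ (a : A) (x y : M), inn (a • x) y = a * inn x y)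
    (inn_star : ∀ x y : M, inn x y = star (inn y x))
    (inn_self_nonneg : ∀ x : M, 0 ≤ inn x x)
    (inn_definite : ∀ x : M, inn x x = 0 → x = 0)
    (norm_eq : ∀ x : M, ‖x‖ = Real.sqrt ‖inn x x‖)
    :
    ∃ φ : ↥(Gamma A M) →ₗ[ℂ] A,
      (∀ (x : M) (f : M →L[ℂ] A), (∀ (a : A) (m : M), f (a • m) = a * f m) →
        ∀ h : f.smulRight x ∈ Gamma A M, φ ⟨f.smulRight x, h⟩ = f x) ∧
      (∀ (a : A) (S S' : ↥(Gamma A M)),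
        (∀ y : M, (S' : M →L[ℂ] M) y = a • (S : M →L[ℂ] M) y) → φ S' = a * φ S) ∧
      (∀ (S : ↥(Gamma A M)) (T : M →L[ℂ] M), (∀ (a : A) (m : M), T (a • m) = a • T m) →
        ∀ (h₁ : (S : M →L[ℂ] M) * T ∈ Gamma A M) (h₂ : T * (S : M →L[ℂ] M) ∈ Gamma A M),
          φ ⟨(S : M →L[ℂ] M) * T, h₁⟩ = φ ⟨T * (S : M →L[ℂ] M), h₂⟩) :=
  Gamma_trace_well_defined_general
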